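/- arXiv:0909.1694 — 4 statements merged into one kernel-verified Lean document; each statement's English description precedes it below -/
import Mathlib

section
/- The map sending an arithmetic sequence a = (a_n)_{n≥1} to the operator ζ_q(a,s) = Σ_{n≥1} (a_n/[n]^s)·F_n is an algebra morphism from the ring of arithmetic functions under Dirichlet convolution to operators: ζ_q(a,s) ∘ ζ_q(b,s) = ζ_q(a*b, s), where (a*b)_n = Σ_{d|n} a_d b_{n/d}. -/
open PowerSeries

/-- The quantum integer `[n] = 1 + q + ⋯ + q^{n-1}` as a power series over `ℂ`. -/
noncomputable def qIntPS (n : ℕ) : PowerSeries ℂ := ∑ i ∈ Finset.range n, (X : PowerSeries ℂ) ^ i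

/-- The formal Frobenius `F_n : f(q) ↦ f(q^n)` on power series. -/
noncomputable def frobPS (n : ℕ) (f : PowerSeries ℂ) : PowerSeries ℂ :=
  PowerSeries.mk fun k => if n ∣ k then coeff (k / n) f else 0

/-- The operator `ζ_q(a, s) = Σ_{n ≥ 1} a_n [n]^{-s} F_n` for an exponent `s = -t ≤ 0`;
on a series without constant term the `k`-th coefficient only involves the terms with
`n ≤ k`, which makes the infinite sum well defined. -/
noncomputable def zetaOp (a : ℕ → ℂ) (t : ℕ) (f : PowerSeries ℂ) : PowerSeries ℂ :=
  PowerSeries.mk fun k =>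
    coeff k (∑ n ∈ Finset.Icc 1 k, (PowerSeries.C (a n)) * qIntPS n ^ t * frobPS n f)

/-- Dirichlet convolution of arithmetic sequences. -/
noncomputable def dConv (a b : ℕ → ℂ) : ℕ → ℂ := fun n => ∑ d ∈ n.divisors, a d * b (n / d)


/-!
Modulo `X^(K+1)` the operator `ζ_q(a,s)` agrees with its truncation `Σ_{n ≤ K} a_n [n]^t F_n`,
since `F_n f` is divisible by `X^n` when `f(0) = 0`, and truncations are compatible with
composition because each `F_n` is a ring endomorphism that preserves divisibility by `X^(K+1)`.
On truncations the identity follows from `a_m [m]^t F_m ∘ b_n [n]^t F_n = a_m b_n [mn]^t F_{mn}`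
(a consequence of `F_m F_n = F_{mn}` and `[mn] = [m] · F_m [n]`) by grouping the pairs `(m, n)`
according to their product; the pairs with `mn > K` only contribute multiples of `X^(K+1)`.
-/

open Finset

lemma Finset.sum_Icc_sum_divisorsAntidiagonal {M : Type*} [AddCommMonoid M] (K : ℕ)
    (F : ℕ × ℕ → M) :
    ∑ N ∈ Icc 1 K, ∑ x ∈ N.divisorsAntidiagonal, F x =
      ∑ x ∈ Icc 1 K ×ˢ Icc 1 K with x.1 * x.2 ≤ K, F x := by
  rw [← sum_fiberwise_of_maps_to (g := fun x : ℕ × ℕ => x.1 * x.2) (t := Icc 1 K)]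
  · refine sum_congr rfl fun N hN => sum_congr ?_ fun _ _ => rfl
    ext ⟨m, n⟩
    simp only [mem_Icc] at hN
    simp only [Nat.mem_divisorsAntidiagonal, mem_filter, mem_product, mem_Icc]
    constructor
    · rintro ⟨rfl, -⟩
      have hm : 0 < m := Nat.pos_of_mul_pos_right hN.1
      have hn : 0 < n := Nat.pos_of_mul_pos_left hN.1
      refine ⟨⟨⟨⟨hm, ?_⟩, hn, ?_⟩, hN.2⟩, rfl⟩ <;> nlinarith
    · rintro ⟨-, rfl⟩
      exact ⟨rfl, by omega⟩
  · intro x hx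
    simp only [mem_filter, mem_product, mem_Icc] at hx ⊢
    exact ⟨Nat.one_le_iff_ne_zero.mpr (Nat.mul_ne_zero (by omega) (by omega)), hx.2⟩

lemma PowerSeries.X_pow_mul_dvd_expand {R : Type*} [CommRing R] {m k : ℕ} (hm : m ≠ 0)
    {g : R⟦X⟧} (h : X ^ k ∣ g) : X ^ (m * k) ∣ expand m hm g := by
  simpa [pow_mul] using map_dvd (expand m hm) h

lemma PowerSeries.eq_of_forall_X_pow_dvd_sub {R : Type*} [CommRing R] {u v : R⟦X⟧}
    (h : ∀ K, X ^ (K + 1) ∣ u - v) : u = v := by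
  ext k
  simpa [sub_eq_zero] using X_pow_dvd_iff.mp (h k) k (Nat.lt_succ_self k)

lemma frobPS_eq_expand {n : ℕ} (hn : n ≠ 0) (f : ℂ⟦X⟧) : frobPS n f = expand n hn f := by
  ext k
  simp [frobPS, coeff_expand]

lemma X_pow_dvd_frobPS {f : ℂ⟦X⟧} (hf : coeff 0 f = 0) (n : ℕ) : X ^ n ∣ frobPS n f := by
  rcases eq_or_ne n 0 with rfl | hn
  · simp
  · rw [frobPS_eq_expand hn]
    simpa using X_pow_mul_dvd_expand hn (k := 1) (by simpa [X_dvd_iff] using hf)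

lemma qIntPS_mul_one_sub_X (n : ℕ) : qIntPS n * (1 - X) = 1 - X ^ n :=
  geom_sum_mul_neg X n

lemma qIntPS_mul {m : ℕ} (hm : m ≠ 0) (n : ℕ) :
    qIntPS (m * n) = qIntPS m * expand m hm (qIntPS n) := by
  have hX : (1 - X : ℂ⟦X⟧) ≠ 0 := fun h => by simpa using congrArg (coeff 0) h
  refine mul_right_cancel₀ hX ?_
  calc qIntPS (m * n) * (1 - X) = expand m hm (qIntPS n * (1 - X)) := by
        simp [qIntPS_mul_one_sub_X, pow_mul]
    _ = qIntPS m * expand m hm (qIntPS n) * (1 - X) := by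
        rw [map_mul, map_sub, map_one, expand_X, ← qIntPS_mul_one_sub_X]
        ring

noncomputable def zetaTerm (c : ℂ) (t n : ℕ) (f : ℂ⟦X⟧) : ℂ⟦X⟧ :=
  C c * qIntPS n ^ t * frobPS n f

noncomputable def zetaTrunc (a : ℕ → ℂ) (t K : ℕ) (f : ℂ⟦X⟧) : ℂ⟦X⟧ :=
  ∑ n ∈ Icc 1 K, zetaTerm (a n) t n f

lemma sum_zetaTerm {ι : Type*} (s : Finset ι) (c : ι → ℂ) (t n : ℕ) (f : ℂ⟦X⟧) :
    zetaTerm (∑ i ∈ s, c i) t n f = ∑ i ∈ s, zetaTerm (c i) t n f := by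
  simp only [zetaTerm, map_sum, sum_mul]

lemma zetaTerm_sum {ι : Type*} {m : ℕ} (hm : m ≠ 0) (c : ℂ) (t : ℕ) (s : Finset ι)
    (g : ι → ℂ⟦X⟧) : zetaTerm c t m (∑ i ∈ s, g i) = ∑ i ∈ s, zetaTerm c t m (g i) := by
  simp only [zetaTerm, frobPS_eq_expand hm, map_sum, mul_sum]

lemma zetaTerm_zetaTerm {m n : ℕ} (hm : m ≠ 0) (hn : n ≠ 0) (α β : ℂ) (t : ℕ) (f : ℂ⟦X⟧) :
    zetaTerm α t m (zetaTerm β t n f) = zetaTerm (α * β) t (m * n) f := by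
  simp only [zetaTerm, frobPS_eq_expand hm, frobPS_eq_expand hn,
    frobPS_eq_expand (mul_ne_zero hm hn), map_mul, map_pow, expand_C, expand_mul _ hm _ hn,
    qIntPS_mul hm]
  ring

lemma X_pow_dvd_zetaTerm {f : ℂ⟦X⟧} (hf : coeff 0 f = 0) (c : ℂ) (t n : ℕ) :
    X ^ n ∣ zetaTerm c t n f :=
  dvd_mul_of_dvd_right (X_pow_dvd_frobPS hf n) _

lemma X_pow_dvd_zetaTerm_sub {m k : ℕ} (hm : m ≠ 0) {u v : ℂ⟦X⟧} (h : X ^ k ∣ u - v)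
    (c : ℂ) (t : ℕ) : X ^ k ∣ zetaTerm c t m u - zetaTerm c t m v := by
  have hsub : zetaTerm c t m u - zetaTerm c t m v =
      C c * qIntPS m ^ t * expand m hm (u - v) := by
    simp only [zetaTerm, frobPS_eq_expand hm, map_sub]
    ring
  have hk : k ≤ m * k := Nat.le_mul_of_pos_left k (Nat.pos_of_ne_zero hm)
  rw [hsub]
  exact dvd_mul_of_dvd_right ((pow_dvd_pow X hk).trans (X_pow_mul_dvd_expand hm h)) _

lemma X_pow_dvd_zetaTrunc_sub {k : ℕ} {u v : ℂ⟦X⟧} (h : X ^ k ∣ u - v) (a : ℕ → ℂ)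
    (t K : ℕ) : X ^ k ∣ zetaTrunc a t K u - zetaTrunc a t K v := by
  rw [zetaTrunc, zetaTrunc, ← sum_sub_distrib]
  exact dvd_sum fun m hm =>
    X_pow_dvd_zetaTerm_sub (Nat.one_le_iff_ne_zero.mp (mem_Icc.mp hm).1) h _ _

lemma coeff_zetaOp (a : ℕ → ℂ) (t : ℕ) (f : ℂ⟦X⟧) (k : ℕ) :
    coeff k (zetaOp a t f) = coeff k (zetaTrunc a t k f) := by
  simp [zetaOp, zetaTrunc, zetaTerm]

lemma coeff_zetaTrunc_of_le {f : ℂ⟦X⟧} (hf : coeff 0 f = 0) (a : ℕ → ℂ) (t : ℕ) {j K : ℕ}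
    (hjK : j ≤ K) : coeff j (zetaTrunc a t K f) = coeff j (zetaTrunc a t j f) := by
  simp only [zetaTrunc, map_sum]
  refine (sum_subset (Icc_subset_Icc_right hjK) fun n hnK hnj => ?_).symm
  have hjn : j < n := by
    simp only [mem_Icc, not_and, not_le] at hnK hnj
    exact hnj hnK.1
  exact X_pow_dvd_iff.mp (X_pow_dvd_zetaTerm hf _ t n) j hjn

lemma X_pow_dvd_zetaOp_sub_zetaTrunc {f : ℂ⟦X⟧} (hf : coeff 0 f = 0) (a : ℕ → ℂ) (t K : ℕ) :
    X ^ (K + 1) ∣ zetaOp a t f - zetaTrunc a t K f := by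
  refine X_pow_dvd_iff.mpr fun j hj => ?_
  rw [map_sub, coeff_zetaOp, coeff_zetaTrunc_of_le hf a t (Nat.lt_succ_iff.mp hj), sub_self]

lemma zetaTrunc_zetaTrunc (a b : ℕ → ℂ) (t K : ℕ) (f : ℂ⟦X⟧) :
    zetaTrunc a t K (zetaTrunc b t K f) =
      ∑ x ∈ Icc 1 K ×ˢ Icc 1 K, zetaTerm (a x.1 * b x.2) t (x.1 * x.2) f := by
  rw [zetaTrunc, sum_product]
  refine sum_congr rfl fun m hm => ?_
  have hm0 : m ≠ 0 := Nat.one_le_iff_ne_zero.mp (mem_Icc.mp hm).1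
  rw [zetaTrunc, zetaTerm_sum hm0]
  exact sum_congr rfl fun n hn =>
    zetaTerm_zetaTerm hm0 (Nat.one_le_iff_ne_zero.mp (mem_Icc.mp hn).1) _ _ t f

lemma zetaTrunc_dConv (a b : ℕ → ℂ) (t K : ℕ) (f : ℂ⟦X⟧) :
    zetaTrunc (dConv a b) t K f =
      ∑ x ∈ Icc 1 K ×ˢ Icc 1 K with x.1 * x.2 ≤ K, zetaTerm (a x.1 * b x.2) t (x.1 * x.2) f := by
  rw [← sum_Icc_sum_divisorsAntidiagonal, zetaTrunc]
  refine sum_congr rfl fun N _ => ?_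
  rw [dConv, ← Nat.sum_divisorsAntidiagonal (fun d e => a d * b e), sum_zetaTerm]
  exact sum_congr rfl fun x hx => by rw [(Nat.mem_divisorsAntidiagonal.mp hx).1]

lemma X_pow_dvd_zetaTrunc_zetaTrunc_sub_zetaTrunc_dConv {f : ℂ⟦X⟧} (hf : coeff 0 f = 0)
    (a b : ℕ → ℂ) (t K : ℕ) :
    X ^ (K + 1) ∣ zetaTrunc a t K (zetaTrunc b t K f) - zetaTrunc (dConv a b) t K f := by
  rw [zetaTrunc_zetaTrunc, zetaTrunc_dConv,
    ← sum_filter_add_sum_filter_not _ (fun x : ℕ × ℕ => x.1 * x.2 ≤ K), add_sub_cancel_left]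
  refine dvd_sum fun x hx => (pow_dvd_pow X ?_).trans (X_pow_dvd_zetaTerm hf _ t _)
  exact Nat.lt_iff_add_one_le.mp (not_le.mp (mem_filter.mp hx).2)

/-- for `s = -t ≤ 0`, the map `a ↦ ζ_q(a,s)` turns Dirichlet convolution into
composition of operators on `q·ℂ[[q]]`: `ζ_q(a,s) ∘ ζ_q(b,s) = ζ_q(a*b,s)`. -/
theorem zetaOp_conv (a b : ℕ → ℂ) (t : ℕ) (f : PowerSeries ℂ)
    (hf : coeff 0 f = 0) :
    zetaOp a t (zetaOp b t f) = zetaOp (dConv a b) t f := by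
  refine eq_of_forall_X_pow_dvd_sub fun K => ?_
  have hg : coeff 0 (zetaOp b t f) = 0 := by simp [coeff_zetaOp, zetaTrunc]
  have h₁ := X_pow_dvd_zetaOp_sub_zetaTrunc hg a t K
  have h₂ := X_pow_dvd_zetaTrunc_sub (X_pow_dvd_zetaOp_sub_zetaTrunc hf b t K) a t K
  have h₃ := X_pow_dvd_zetaTrunc_zetaTrunc_sub_zetaTrunc_dConv hf a b t K
  have h₄ := X_pow_dvd_zetaOp_sub_zetaTrunc hf (dConv a b) t K
  convert dvd_add (dvd_add h₁ h₂) (dvd_sub h₃ h₄) using 1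
  ring
end

section
/- The formal series B(t) = Σ_{n≥0} ((1−q) q^n e^{[n]t} − t q^{2n} e^{[n]t}) satisfies the functional equation B(t) = q e^t B(qt) + 1 − q − t, hence equals the generating series 𝔹(t) of the Bernoulli–Carlitz fractions. -/
/-!
Write `u_n(t) = ((1 - q) q^n - t q^{2n}) e^{[n]t}`. Since `1 + q[n] = [n+1]`, the operator
`L Y = q e^t Y(qt)` maps `u_n` to `u_{n+1}`, so the partial sums `S_N = ∑_{n<N} u_n` satisfy
`S_{N+1} = L S_N + u_0` with `u_0 = 1 - q - t`. The `t`-coefficients of `B - S_N` are divisible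
by `q^N`, and `L` raises this `q`-adic divisibility by one; hence `B - L B - u_0` is divisible by
every power of `q` and vanishes. The same contraction property of `L` gives uniqueness.
-/

open PowerSeries

/-- The quantum integer `[n] = 1 + q + ⋯ + q^{n-1}` as a polynomial over `ℚ`. -/
noncomputable def qIntP (n : ℕ) : Polynomial ℚ := ∑ i ∈ Finset.range n, Polynomial.X ^ i

/-- The coefficient of `t^k/k!` in the `n`-th summand
`(1−q) q^n e^{[n]t} − t q^{2n} e^{[n]t}`, namely `(1−q) q^n [n]^k − k q^{2n} [n]^{k-1}`. -/
noncomputable def bTerm (n k : ℕ) : Polynomial ℚ :=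
  (1 - Polynomial.X) * Polynomial.X ^ n * qIntP n ^ k -
    (if k = 0 then 0 else (k : Polynomial ℚ) * Polynomial.X ^ (2 * n) * qIntP n ^ (k - 1))

/-- The series `B(t) = Σ_{n≥0} ((1−q) q^n e^{[n]t} − t q^{2n} e^{[n]t})`, an element of
`ℚ[[q]][[t]]`; the sum over `n` converges coefficientwise in the `q`-adic topology since
the `n`-th summand has `q`-order at least `n`. -/
noncomputable def Bq : PowerSeries (PowerSeries ℚ) :=
  PowerSeries.mk fun k => ((k.factorial : ℚ)⁻¹) •
    (PowerSeries.mk fun d : ℕ =>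
      ∑ n ∈ Finset.range (d + 1), Polynomial.coeff (bTerm n k) d : PowerSeries ℚ)

open Finset
open scoped Polynomial Nat

namespace PowerSeries

variable {R : Type*} [CommRing R]

theorem C_dvd_iff {a : R} {f : R⟦X⟧} : C a ∣ f ↔ ∀ k, a ∣ coeff k f := by
  constructor
  · rintro ⟨g, rfl⟩ k
    rw [coeff_C_mul]
    exact dvd_mul_right a _
  · intro h
    choose g hg using h
    exact ⟨mk g, ext fun k => by rw [coeff_C_mul, coeff_mk, hg]⟩

theorem rescale_C (a b : R) : rescale a (C b) = C b := by
  ext (_ | n) <;> simp [coeff_C]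

theorem eq_zero_of_forall_C_X_pow_dvd {f : R⟦X⟧⟦X⟧} (h : ∀ N, C (X ^ N) ∣ f) : f = 0 := by
  ext k d
  exact X_pow_dvd_iff.1 (C_dvd_iff.1 (h (d + 1)) k) d d.lt_succ_self

theorem C_X_mul_dvd_C_X_mul_mul_rescale {a : R⟦X⟧} {f : R⟦X⟧⟦X⟧} (F : R⟦X⟧⟦X⟧) (h : C a ∣ f) :
    C (X * a) ∣ C X * F * rescale X f := by
  obtain ⟨g, rfl⟩ := h
  exact ⟨F * rescale X g, by rw [map_mul, rescale_C, map_mul]; ring⟩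

theorem eq_of_eq_C_X_mul_mul_rescale_add {F G f g : R⟦X⟧⟦X⟧}
    (hf : f = C X * F * rescale X f + G) (hg : g = C X * F * rescale X g + G) : f = g := by
  have hfix : f - g = C X * F * rescale X (f - g) := by
    rw [map_sub]
    linear_combination hf - hg
  have hdvd : ∀ N, C (X ^ N) ∣ f - g := by
    intro N
    induction N with
    | zero => simp
    | succ N ih =>
      rw [pow_succ', hfix]
      exact C_X_mul_dvd_C_X_mul_mul_rescale F ih
  exact sub_eq_zero.1 (eq_zero_of_forall_C_X_pow_dvd hdvd)

theorem X_pow_dvd_mk_sum_coeff_sub_sum {f : ℕ → R[X]} (hf : ∀ n, Polynomial.X ^ n ∣ f n)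
    (N : ℕ) :
    (X : R⟦X⟧) ^ N ∣
      mk (fun d => ∑ n ∈ range (d + 1), (f n).coeff d) - ∑ n ∈ range N, (f n : R⟦X⟧) := by
  refine X_pow_dvd_iff.2 fun d hd => ?_
  rw [map_sub, coeff_mk, map_sum, sub_eq_zero]
  simp only [Polynomial.coeff_coe]
  refine sum_subset (range_subset_range.2 hd) fun n _ hnd => ?_
  exact Polynomial.X_pow_dvd_iff.1 (hf n) d (by simpa using hnd)

end PowerSeries

section CarlitzSummand

variable {A : Type*} [CommRing A] [Algebra ℚ A] (q : A)

noncomputable def carlitzSummand (n : ℕ) : A⟦X⟧ :=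
  (C ((1 - q) * q ^ n) - C (q ^ (2 * n)) * X) * rescale (∑ i ∈ range n, q ^ i) (exp A)

theorem carlitzSummand_zero : carlitzSummand q 0 = C (1 - q) - X := by
  simp [carlitzSummand]

theorem C_mul_exp_mul_rescale_carlitzSummand (n : ℕ) :
    C q * exp A * rescale q (carlitzSummand q n) = carlitzSummand q (n + 1) := by
  have hexp : exp A * rescale (q * ∑ i ∈ range n, q ^ i) (exp A) =
      rescale (∑ i ∈ range (n + 1), q ^ i) (exp A) := by
    rw [geom_sum_succ, add_comm, ← exp_mul_exp_eq_exp_add, rescale_one, RingHom.id_apply]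
  simp only [carlitzSummand, map_mul, map_sub, rescale_C, rescale_X, rescale_rescale]
  rw [mul_comm _ q, ← hexp]
  simp only [map_pow, map_one]
  ring

theorem coeff_carlitzSummand (n k : ℕ) :
    coeff k (carlitzSummand q n) = (k ! : ℚ)⁻¹ • ((1 - q) * q ^ n * (∑ i ∈ range n, q ^ i) ^ k -
      k * q ^ (2 * n) * (∑ i ∈ range n, q ^ i) ^ (k - 1)) := by
  rcases k with _ | k
  · simp only [carlitzSummand, sub_mul, map_sub, mul_assoc, coeff_C_mul, coeff_zero_X_mul,
      coeff_rescale, coeff_exp]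
    simp
  · have hfact : algebraMap ℚ A (k ! : ℚ)⁻¹ = algebraMap ℚ A ((k + 1)! : ℚ)⁻¹ * (k + 1 : ℕ) := by
      rw [← map_natCast (algebraMap ℚ A), ← map_mul, Nat.factorial_succ]
      congr 1
      push_cast
      field_simp
    simp only [carlitzSummand, sub_mul, map_sub, mul_assoc, coeff_C_mul, coeff_succ_X_mul,
      coeff_rescale, coeff_exp, Algebra.smul_def, one_div, hfact, add_tsub_cancel_right]
    ring

theorem sum_range_succ_carlitzSummand (N : ℕ) :
    ∑ n ∈ range (N + 1), carlitzSummand q n =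
      C q * exp A * rescale q (∑ n ∈ range N, carlitzSummand q n) + (C (1 - q) - X) := by
  rw [sum_range_succ', map_sum, mul_sum, carlitzSummand_zero]
  simp_rw [C_mul_exp_mul_rescale_carlitzSummand]

end CarlitzSummand

theorem bTerm_eq (n k : ℕ) :
    bTerm n k = (1 - Polynomial.X) * Polynomial.X ^ n * qIntP n ^ k -
      (k : ℚ[X]) * Polynomial.X ^ (2 * n) * qIntP n ^ (k - 1) := by
  rw [bTerm]
  split_ifs with hk <;> simp [hk]

theorem X_pow_dvd_bTerm (n k : ℕ) : Polynomial.X ^ n ∣ bTerm n k := by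
  rw [bTerm_eq]
  exact dvd_sub ((dvd_mul_left _ _).mul_right _)
    (((pow_dvd_pow _ (by omega)).mul_left _).mul_right _)

theorem coe_bTerm (n k : ℕ) :
    (bTerm n k : ℚ⟦X⟧) = (1 - X) * X ^ n * (∑ i ∈ range n, X ^ i) ^ k -
      (k : ℚ⟦X⟧) * X ^ (2 * n) * (∑ i ∈ range n, X ^ i) ^ (k - 1) := by
  rw [bTerm_eq, qIntP, ← Polynomial.coeToPowerSeries.ringHom_apply]
  simp only [map_sub, map_mul, map_pow, map_sum, map_natCast, map_one,
    Polynomial.coeToPowerSeries.ringHom_apply, Polynomial.coe_X]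

theorem coeff_carlitzSummand_X (n k : ℕ) :
    coeff k (carlitzSummand (X : ℚ⟦X⟧) n) = (k ! : ℚ)⁻¹ • (bTerm n k : ℚ⟦X⟧) := by
  rw [coeff_carlitzSummand, coe_bTerm]

theorem C_X_pow_dvd_Bq_sub_sum (N : ℕ) :
    C (X ^ N) ∣ Bq - ∑ n ∈ range N, carlitzSummand (X : ℚ⟦X⟧) n := by
  refine C_dvd_iff.2 fun k => ?_
  simp only [map_sub, map_sum, coeff_carlitzSummand_X, Bq, coeff_mk, smul_eq_C_mul, ← mul_sum,
    ← mul_sub]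
  exact (X_pow_dvd_mk_sum_coeff_sub_sum (X_pow_dvd_bTerm · k) N).mul_left _

theorem Bq_eq_C_X_mul_exp_mul_rescale_add :
    Bq = C X * exp ℚ⟦X⟧ * rescale X Bq + (C (1 - X) - X) := by
  refine sub_eq_zero.1 (eq_zero_of_forall_C_X_pow_dvd fun N => ?_)
  have htele : Bq - (C X * exp ℚ⟦X⟧ * rescale X Bq + (C (1 - X) - X)) =
      (Bq - ∑ n ∈ range (N + 1), carlitzSummand X n) -
        C X * exp ℚ⟦X⟧ * rescale X (Bq - ∑ n ∈ range N, carlitzSummand X n) := by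
    rw [map_sub (rescale _), sum_range_succ_carlitzSummand]
    ring
  rw [htele]
  exact dvd_sub ((map_dvd C (pow_dvd_pow X N.le_succ)).trans (C_X_pow_dvd_Bq_sub_sum _))
    ((map_dvd C (dvd_mul_left _ X)).trans
      (C_X_mul_dvd_C_X_mul_mul_rescale _ (C_X_pow_dvd_Bq_sub_sum N)))

/-- `B(t)` satisfies the functional equation `B(t) = q e^t B(qt) + 1 − q − t`,
and is its unique power-series solution, hence equals the generating series `𝔹(t)` of the
Bernoulli–Carlitz fractions. -/
theorem Bq_functional_equation :
    (Bq = (PowerSeries.C : PowerSeries ℚ →+* PowerSeries (PowerSeries ℚ)) PowerSeries.X * PowerSeries.exp (PowerSeries ℚ) *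
        PowerSeries.rescale PowerSeries.X Bq
      + (PowerSeries.C : PowerSeries ℚ →+* PowerSeries (PowerSeries ℚ)) (1 - PowerSeries.X) - PowerSeries.X) ∧
    (∀ Y : PowerSeries (PowerSeries ℚ),
      (Y = (PowerSeries.C : PowerSeries ℚ →+* PowerSeries (PowerSeries ℚ)) PowerSeries.X * PowerSeries.exp (PowerSeries ℚ) *
          PowerSeries.rescale PowerSeries.X Y
        + (PowerSeries.C : PowerSeries ℚ →+* PowerSeries (PowerSeries ℚ)) (1 - PowerSeries.X) - PowerSeries.X) → Y = Bq) := by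
  simp only [add_sub_assoc]
  exact ⟨Bq_eq_C_X_mul_exp_mul_rescale_add,
    fun Y hY => eq_of_eq_C_X_mul_mul_rescale_add hY Bq_eq_C_X_mul_exp_mul_rescale_add⟩
end

section
/- The q-Zeta operator satisfies the distribution relation: for every positive integer N, every positive rational x, and every exponent s, Σ_{j=0}^{N−1} (F_N/[N]^s) ∘ ζ_q(s, (x+j)/N) = ζ_q(s, x), where ζ_q(s,x) = Σ_{n≥0} F_{n+x}/[n+x]^s. -/
open Real

/-- The quantum number `[x] = (q^x − 1)/(q − 1)` for a real exponent `x` (via `rpow`). -/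
noncomputable def qNumR (q x : ℝ) : ℝ := (q ^ x - 1) / (q - 1)

/-- The Hurwitz `q`-Zeta operator at a nonpositive integer exponent `s = -t`:
`ζ_q(s,x) f (q) = Σ_{k≥0} [k+x]^t f(q^{k+x})`. -/
noncomputable def hurwitzZetaQ (q : ℝ) (t : ℕ) (x : ℝ) (f : ℝ → ℂ) : ℂ :=
  ∑' k : ℕ, ((qNumR q ((k : ℝ) + x)) ^ t : ℂ) * f (q ^ ((k : ℝ) + x))

/-!
Splitting `n = j + N m` by residues mod `N`, the series for `ζ_q(s, x)` becomes a sum over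
`j < N` of series in `m`; the `m`-th term of the `j`-th one is `[N]^t` times the `m`-th term of
`ζ_{q^N}(s, (x + j)/N)`, because `(q^N)^y = q^{N y}` and `[N]_q [y]_{q^N} = [N y]_q`.
-/

theorem qNumR_mul_qNumR_rpow {q a : ℝ} (hq : 0 ≤ q) (ha : q ^ a ≠ 1) (b : ℝ) :
    qNumR q a * qNumR (q ^ a) b = qNumR q (a * b) := by
  have ha' : q ^ a - 1 ≠ 0 := sub_ne_zero.mpr ha
  rw [qNumR, qNumR, qNumR, rpow_mul hq, div_mul_div_comm, mul_comm (q ^ a - 1),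
    mul_div_mul_right _ _ ha']

theorem tsum_eq_sum_range_tsum_add_mul {R : Type*} [AddCommGroup R] [UniformSpace R]
    [IsUniformAddGroup R] [CompleteSpace R] [T0Space R] {f : ℕ → R} (hf : Summable f)
    (N : ℕ) [NeZero N] :
    ∑' n, f n = ∑ j ∈ Finset.range N, ∑' m, f (j + N * m) := by
  rw [Nat.sumByResidueClasses hf N]
  refine Finset.sum_nbij' ZMod.val Nat.cast (fun j _ => by simpa using ZMod.val_lt j)
    (fun _ _ => Finset.mem_univ _) (fun j _ => ZMod.natCast_zmod_val j)
    (fun j hj => ZMod.val_natCast_of_lt (Finset.mem_range.mp hj)) fun _ _ => rfl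

theorem hurwitzZetaQ_distribution_general (N : ℕ) (hN : 0 < N) (x : ℚ) (t : ℕ)
    (q : ℝ) (hq : q ∈ Set.Ioo (0 : ℝ) 1) (f : ℝ → ℂ)
    (hsum : Summable fun k : ℕ => ((qNumR q ((k : ℝ) + x)) ^ t : ℂ) * f (q ^ ((k : ℝ) + x))) :
    ∑ j ∈ Finset.range N,
        ((qNumR q N) ^ t : ℂ) * hurwitzZetaQ (q ^ (N : ℝ)) t (((x : ℝ) + j) / N) f
      = hurwitzZetaQ q t x f := by
  have : NeZero N := ⟨hN.ne'⟩
  have hqN : q ^ (N : ℝ) ≠ 1 := (rpow_lt_one hq.1.le hq.2 (Nat.cast_pos.mpr hN)).ne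
  rw [hurwitzZetaQ, tsum_eq_sum_range_tsum_add_mul hsum N]
  refine Finset.sum_congr rfl fun j _ => ?_
  rw [hurwitzZetaQ, ← tsum_mul_left]
  refine tsum_congr fun m => ?_
  have hexp : (N : ℝ) * ((m : ℝ) + ((x : ℝ) + j) / N) = ((j + N * m : ℕ) : ℝ) + x := by
    field_simp
    push_cast
    ring
  rw [← rpow_mul hq.1.le, ← mul_assoc, ← mul_pow, ← Complex.ofReal_mul,
    qNumR_mul_qNumR_rpow hq.1.le hqN, hexp]

/-- the distribution relation for the Hurwitz `q`-Zeta operator: for every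
positive integer `N`, every positive rational `x`, and every nonpositive integer exponent
`s = -t`, `Σ_{0 ≤ j < N} (F_N/[N]^s) ∘ ζ_q(s,(x+j)/N) = ζ_q(s,x)` (applied to `f`; the
summability hypothesis expresses the `q`-adic/analytic convergence of the defining series). -/
theorem hurwitzZetaQ_distribution (N : ℕ) (hN : 0 < N) (x : ℚ) (hx : 0 < x) (t : ℕ)
    (q : ℝ) (hq : q ∈ Set.Ioo (0 : ℝ) 1) (f : ℝ → ℂ)
    (hsum : Summable fun k : ℕ => ((qNumR q ((k : ℝ) + x)) ^ t : ℂ) * f (q ^ ((k : ℝ) + x))) :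
    ∑ j ∈ Finset.range N,
        ((qNumR q N) ^ t : ℂ) * hurwitzZetaQ (q ^ (N : ℝ)) t (((x : ℝ) + j) / N) f
      = hurwitzZetaQ q t x f :=
  hurwitzZetaQ_distribution_general N hN x t q hq f hsum
end

section
/- For every integer i ≤ 0, integer r ≥ 1, and Dirichlet character χ mod N, the value L_q(χ,i)(q^r) = Σ_{n≥1} χ(n) [n]^{−i} q^{nr} is a rational function of q, with no pole at q = 0 (it vanishes at q = 0) and all poles lying on the unit circle (roots of unity). -/
/-!
With `m = |i|`, write `L_m(r) = Σ_{n≥1} χ(n) [n]^m q^{nr}`, a coefficientwise convergent sum.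
Since `[n] (q - 1) = q^n - 1`, the `q`-difference relation `(q - 1) L_{m+1}(r) = L_m(r+1) - L_m(r)`
holds, so by induction on `m` it suffices to treat `m = 0`. There periodicity of `χ` gives
`(1 - q^{Nr}) L_0(r) = Σ_{n=1}^{N} χ(n) q^{nr}`. All denominators produced are products of
`q - 1` and `1 - q^{Nr}`, whose zeros are roots of unity, and the numerator vanishes at `0`
because `L_m(r)` does.
-/

open PowerSeries

/-- The series `L_q(χ,i)(q^r) = Σ_{n≥1} χ(n) [n]^{-i} q^{nr}` for `i ≤ 0`; the `n`-th term
has order at least `n`, so the `d`-th coefficient only involves `n ≤ d`. -/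
noncomputable def LqValue (N : ℕ) [NeZero N] (χ : DirichletCharacter ℂ N) (i : ℤ) (r : ℕ) :
    PowerSeries ℂ :=
  PowerSeries.mk fun d => coeff d
    (∑ n ∈ Finset.Icc 1 d, PowerSeries.C (χ ((n : ℕ) : ZMod N)) * qIntPS n ^ i.natAbs *
      X ^ (n * r))

open Finset

namespace Polynomial

section Semiring

variable {R : Type*} [Semiring R]

theorem eval_zero_eq_zero_of_coe_eq_mul {f : PowerSeries R} {p q : R[X]}
    (h : f * p = q) (hf : PowerSeries.constantCoeff f = 0) : q.eval 0 = 0 := by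
  rw [← coeff_zero_eq_eval_zero, ← constantCoeff_coe, ← h, map_mul, hf, zero_mul]

end Semiring

variable {R : Type*} [CommRing R]

def ZerosAreRootsOfUnity (p : R[X]) : Prop :=
  ∀ z : R, p.eval z = 0 → ∃ k : ℕ, 0 < k ∧ z ^ k = 1

theorem ZerosAreRootsOfUnity.mul [NoZeroDivisors R] {p q : R[X]} (hp : p.ZerosAreRootsOfUnity)
    (hq : q.ZerosAreRootsOfUnity) : (p * q).ZerosAreRootsOfUnity := fun z hz =>
  (mul_eq_zero.mp ((eval_mul (p := p)).symm.trans hz)).elim (hp z) (hq z)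

theorem zerosAreRootsOfUnity_X_sub_one : (X - 1 : R[X]).ZerosAreRootsOfUnity := fun z hz =>
  ⟨1, one_pos, by simpa [sub_eq_zero] using hz⟩

theorem zerosAreRootsOfUnity_one_sub_X_pow {k : ℕ} (hk : 0 < k) :
    (1 - X ^ k : R[X]).ZerosAreRootsOfUnity := fun z hz =>
  ⟨k, hk, (sub_eq_zero.mp (by simpa using hz)).symm⟩

end Polynomial

namespace PowerSeries

variable {R : Type*} [CommRing R]

/-- Since `0` is not a root of unity, the denominator cannot vanish at `0`, in particular
it is not the zero polynomial. -/
def IsRationalWithRootOfUnityPoles (f : R⟦X⟧) : Prop :=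
  ∃ num den : Polynomial R, den.ZerosAreRootsOfUnity ∧ f * den = num

namespace IsRationalWithRootOfUnityPoles

variable [NoZeroDivisors R]

theorem sub {f g : R⟦X⟧} (hf : f.IsRationalWithRootOfUnityPoles)
    (hg : g.IsRationalWithRootOfUnityPoles) : (f - g).IsRationalWithRootOfUnityPoles := by
  obtain ⟨p, q, hq, hfq⟩ := hf
  obtain ⟨p', q', hq', hgq'⟩ := hg
  refine ⟨p * q' - p' * q, q * q', hq.mul hq', ?_⟩
  rw [Polynomial.coe_sub, Polynomial.coe_mul, Polynomial.coe_mul, Polynomial.coe_mul, ← hfq,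
    ← hgq']
  ring

theorem of_mul {f : R⟦X⟧} {p : Polynomial R} (hp : p.ZerosAreRootsOfUnity)
    (h : (f * p).IsRationalWithRootOfUnityPoles) : f.IsRationalWithRootOfUnityPoles := by
  obtain ⟨num, den, hden, h⟩ := h
  exact ⟨num, p * den, hp.mul hden, by rw [Polynomial.coe_mul, ← mul_assoc, h]⟩

end IsRationalWithRootOfUnityPoles

end PowerSeries

theorem HasSum.mul_one_sub_eq_sum_range {R : Type*} [Ring R] [TopologicalSpace R]
    [IsTopologicalRing R] [T2Space R] {f : ℕ → R} {F g : R} (hf : HasSum f F) (N : ℕ)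
    (hshift : ∀ n, f (n + N) = f n * g) : F * (1 - g) = ∑ n ∈ range N, f n := by
  have hdrop : HasSum (fun n => f (n + N)) (F - ∑ n ∈ range N, f n) :=
    (hasSum_nat_add_iff' N).mpr hf
  have hmul : HasSum (fun n => f (n + N)) (F * g) := by
    simpa only [hshift] using hf.mul_right g
  rw [mul_sub, mul_one, hmul.unique hdrop, sub_sub_cancel]

open scoped PowerSeries.WithPiTopology

theorem PowerSeries.hasSum_mk_coeff_sum_Icc {R : Type*} [Semiring R] [TopologicalSpace R]
    {f : ℕ → R⟦X⟧} (hf : ∀ n d, d < n → coeff d (f n) = 0) :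
    HasSum (fun n => f (n + 1)) (mk fun d => coeff d (∑ n ∈ Icc 1 d, f n)) := by
  refine (WithPiTopology.hasSum_iff_hasSum_coeff R).mpr fun d => ?_
  have hsupp : ∀ n ∉ range d, coeff d (f (n + 1)) = 0 := fun n hn =>
    hf _ _ (by rw [mem_range, not_lt] at hn; omega)
  convert hasSum_sum_of_ne_finset_zero (L := SummationFilter.unconditional ℕ) hsupp using 1
  rw [coeff_mk, map_sum, ← Ico_add_one_right_eq_Icc, sum_Ico_eq_sum_range, Nat.add_sub_cancel]
  simp only [add_comm 1]

section LqValue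

variable {N : ℕ} (χ : DirichletCharacter ℂ N)

noncomputable def LqSummand (m r n : ℕ) : ℂ⟦X⟧ :=
  C (χ ((n : ℕ) : ZMod N)) * qIntPS n ^ m * X ^ (n * r)

theorem coeff_LqSummand_of_lt {m r n d : ℕ} (hr : 1 ≤ r) (hd : d < n) :
    coeff d (LqSummand χ m r n) = 0 := by
  rw [LqSummand, coeff_mul_X_pow', if_neg]
  exact fun h => (hd.trans_le (Nat.le_mul_of_pos_right n hr)).not_ge h

theorem qIntPS_mul_X_sub_one (n : ℕ) : qIntPS n * (X - 1) = X ^ n - 1 :=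
  geom_sum_mul X n

theorem LqSummand_succ_mul_X_sub_one (m r n : ℕ) :
    LqSummand χ (m + 1) r n * (X - 1) = LqSummand χ m (r + 1) n - LqSummand χ m r n := by
  simp only [LqSummand]
  linear_combination (C (χ n) * qIntPS n ^ m * X ^ (n * r)) * qIntPS_mul_X_sub_one n

theorem LqSummand_zero_add_modulus (r n : ℕ) :
    LqSummand χ 0 r (n + N) = LqSummand χ 0 r n * X ^ (N * r) := by
  simp only [LqSummand, Nat.cast_add, ZMod.natCast_self, add_zero, pow_zero, mul_one, add_mul,
    pow_add]
  ring

variable [NeZero N]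

theorem hasSum_LqValue (i : ℤ) {r : ℕ} (hr : 1 ≤ r) :
    HasSum (fun n => LqSummand χ i.natAbs r (n + 1)) (LqValue N χ i r) :=
  hasSum_mk_coeff_sum_Icc fun _ _ => coeff_LqSummand_of_lt χ hr

theorem LqValue_succ_mul_X_sub_one (m : ℕ) {r : ℕ} (hr : 1 ≤ r) :
    LqValue N χ (m + 1 : ℕ) r * (X - 1) = LqValue N χ m (r + 1) - LqValue N χ m r := by
  have hL := (hasSum_LqValue χ (m + 1 : ℕ) hr).mul_right (X - 1)
  have hΔ := (hasSum_LqValue χ m (hr.trans r.le_succ)).sub (hasSum_LqValue χ m hr)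
  simp only [Int.natAbs_natCast, LqSummand_succ_mul_X_sub_one] at hL hΔ
  exact hL.unique hΔ

theorem LqValue_zero_mul_one_sub_X_pow {r : ℕ} (hr : 1 ≤ r) :
    LqValue N χ 0 r * (1 - X ^ (N * r)) = ∑ n ∈ range N, LqSummand χ 0 r (n + 1) :=
  (hasSum_LqValue χ 0 hr).mul_one_sub_eq_sum_range N fun n => by
    rw [add_right_comm]
    exact LqSummand_zero_add_modulus χ r (n + 1)

theorem isRationalWithRootOfUnityPoles_LqValue_zero {r : ℕ} (hr : 1 ≤ r) :
    (LqValue N χ 0 r).IsRationalWithRootOfUnityPoles := by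
  refine ⟨∑ n ∈ range N, Polynomial.C (χ ((n + 1 : ℕ) : ZMod N)) * Polynomial.X ^ ((n + 1) * r),
    1 - Polynomial.X ^ (N * r),
    Polynomial.zerosAreRootsOfUnity_one_sub_X_pow (Nat.mul_pos (NeZero.pos N) hr), ?_⟩
  rw [← Polynomial.coeToPowerSeries.ringHom_apply, ← Polynomial.coeToPowerSeries.ringHom_apply]
  simp only [map_sum, map_sub, map_mul, map_pow, map_one, Polynomial.coeToPowerSeries.ringHom_apply,
    Polynomial.coe_C, Polynomial.coe_X, LqValue_zero_mul_one_sub_X_pow χ hr, LqSummand, pow_zero,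
    mul_one]

theorem isRationalWithRootOfUnityPoles_LqValue_natCast (m : ℕ) {r : ℕ} (hr : 1 ≤ r) :
    (LqValue N χ m r).IsRationalWithRootOfUnityPoles := by
  induction m generalizing r with
  | zero => exact isRationalWithRootOfUnityPoles_LqValue_zero χ hr
  | succ m ih =>
    refine .of_mul Polynomial.zerosAreRootsOfUnity_X_sub_one ?_
    rw [Polynomial.coe_sub, Polynomial.coe_X, Polynomial.coe_one,
      LqValue_succ_mul_X_sub_one χ m hr]
    exact (ih (hr.trans r.le_succ)).sub (ih hr)

theorem LqValue_natAbs (i : ℤ) (r : ℕ) : LqValue N χ i.natAbs r = LqValue N χ i r := by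
  simp only [LqValue, Int.natAbs_natCast]

theorem constantCoeff_LqValue (i : ℤ) (r : ℕ) : constantCoeff (LqValue N χ i r) = 0 := by
  simp [LqValue]

end LqValue

theorem LqValue_rational_general (N : ℕ) [NeZero N] (χ : DirichletCharacter ℂ N) (i : ℤ)
    (r : ℕ) (hr : 1 ≤ r) :
    ∃ num den : Polynomial ℂ,
      (∀ z : ℂ, den.eval z = 0 → ∃ k : ℕ, 0 < k ∧ z ^ k = 1) ∧
      num.eval 0 = 0 ∧
      LqValue N χ i r * (den : PowerSeries ℂ) = (num : PowerSeries ℂ) := by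
  obtain ⟨num, den, hden, hmul⟩ :=
    LqValue_natAbs χ i r ▸ isRationalWithRootOfUnityPoles_LqValue_natCast χ i.natAbs hr
  exact ⟨num, den, hden,
    Polynomial.eval_zero_eq_zero_of_coe_eq_mul hmul (constantCoeff_LqValue χ i r), hmul⟩

/-- for `i ≤ 0`, `r ≥ 1` and a Dirichlet character `χ` mod `N`, the value
`L_q(χ,i)(q^r) = Σ_{n≥1} χ(n) [n]^{-i} q^{nr}` is a rational function of `q`, vanishing at
`q = 0` and with all poles at roots of unity (on the unit circle). -/
theorem LqValue_rational (N : ℕ) [NeZero N] (χ : DirichletCharacter ℂ N) (i : ℤ)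
    (hi : i ≤ 0) (r : ℕ) (hr : 1 ≤ r) :
    ∃ num den : Polynomial ℂ,
      (∀ z : ℂ, den.eval z = 0 → ∃ k : ℕ, 0 < k ∧ z ^ k = 1) ∧
      num.eval 0 = 0 ∧
      LqValue N χ i r * (den : PowerSeries ℂ) = (num : PowerSeries ℂ) :=
  LqValue_rational_general N χ i r hr
end
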